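/- Let f: ℝᵐ → ℝ and k: ℝᵈ → ℝᵐ be C² functions with k(0) = x, and let G: [0,∞) → ℝ be locally bounded and measurable. Then for all c > 0, ∫_{B(0,c)} G(‖v‖₂)·[⟨∇f(x), k'(0)(v) + ½ k''(0)(v,v)⟩ + ½ f''(x)(k'(0)(v), k'(0)(v))] dv = ½ Δ(f∘k)(0) · (1/d)·∫_{B(0,c)} G(‖v‖₂)·‖v‖₂² dv, where Δ is the Euclidean Laplacian on ℝᵈ. -/

import Mathlib

set_option maxHeartbeats 1000000

open MeasureTheory Metric
open scoped RealInnerProductSpace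

section Aux

variable {d : ℕ}

private lemma isom_integral8 (e : EuclideanSpace ℝ (Fin d) ≃ₗᵢ[ℝ] EuclideanSpace ℝ (Fin d))
    (F : EuclideanSpace ℝ (Fin d) → ℝ) (c : ℝ) :
    ∫ v in ball (0 : EuclideanSpace ℝ (Fin d)) c, F (e v)
      = ∫ v in ball (0 : EuclideanSpace ℝ (Fin d)) c, F v := by
  have h := e.measurePreserving.setIntegral_preimage_emb
    e.toHomeomorph.measurableEmbedding F (ball 0 c)
  have hs : e ⁻¹' (ball (0 : EuclideanSpace ℝ (Fin d)) c) = ball 0 c := by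
    ext v
    simp [mem_ball_zero_iff, e.norm_map]
  rwa [hs] at h

private lemma odd_integral8 (g : EuclideanSpace ℝ (Fin d) → ℝ)
    (hodd : ∀ v, g (-v) = -g v) (c : ℝ) :
    ∫ v in ball (0 : EuclideanSpace ℝ (Fin d)) c, g v = 0 := by
  have h := isom_integral8 (.neg ℝ) g c
  simp only [LinearIsometryEquiv.coe_neg, hodd, integral_neg] at h
  linarith

private lemma integrable_aux8 (G : ℝ → ℝ) (hGm : Measurable G)
    (hGb : ∀ r : ℝ, 0 < r → ∃ C : ℝ, ∀ a ∈ Set.Icc (0 : ℝ) r, |G a| ≤ C)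
    (c : ℝ) (hc : 0 < c) (g : EuclideanSpace ℝ (Fin d) → ℝ) (hgc : Continuous g) :
    IntegrableOn (fun v => G ‖v‖ * g v) (ball (0 : EuclideanSpace ℝ (Fin d)) c) := by
  obtain ⟨C, hC⟩ := hGb c hc
  obtain ⟨D, hD⟩ := (isCompact_closedBall (0 : EuclideanSpace ℝ (Fin d)) c).exists_bound_of_continuousOn
    hgc.continuousOn
  refine Measure.integrableOn_of_bounded (M := C * D) (measure_ball_lt_top).ne
    ((hGm.comp measurable_norm).mul hgc.measurable).aestronglyMeasurable ?_
  filter_upwards [ae_restrict_mem measurableSet_ball] with v hv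
  have hv1 : ‖v‖ < c := mem_ball_zero_iff.mp hv
  have h1 : |G ‖v‖| ≤ C := hC _ ⟨norm_nonneg _, hv1.le⟩
  have h2 : |g v| ≤ D := hD v (by simp [mem_closedBall_zero_iff, hv1.le])
  calc ‖G ‖v‖ * g v‖ = |G ‖v‖| * |g v| := abs_mul _ _
    _ ≤ C * D := mul_le_mul h1 h2 (abs_nonneg _) ((abs_nonneg _).trans h1)

private lemma moment_offdiag8 (G : ℝ → ℝ) (c : ℝ) (i j : Fin d) (hij : i ≠ j) :
    ∫ v in ball (0 : EuclideanSpace ℝ (Fin d)) c, G ‖v‖ * (v i * v j) = 0 := by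
  classical
  set e : EuclideanSpace ℝ (Fin d) ≃ₗᵢ[ℝ] EuclideanSpace ℝ (Fin d) :=
    LinearIsometryEquiv.piLpCongrRight 2
      (fun t : Fin d => if t = i then LinearIsometryEquiv.neg ℝ
        else LinearIsometryEquiv.refl ℝ ℝ) with he
  have happ : ∀ (v : EuclideanSpace ℝ (Fin d)) (t : Fin d),
      e v t = if t = i then -(v t) else v t := by
    intro v t
    rw [he, LinearIsometryEquiv.piLpCongrRight_apply]
    by_cases h : t = i
    · subst h; simp
    · simp [h]
  have h := isom_integral8 e (fun v => G ‖v‖ * (v i * v j)) c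
  simp only [e.norm_map, happ, if_true, if_neg hij.symm, eq_self_iff_true] at h
  have h2 : ∫ v in ball (0 : EuclideanSpace ℝ (Fin d)) c, G ‖v‖ * (-(v i) * v j)
      = - ∫ v in ball (0 : EuclideanSpace ℝ (Fin d)) c, G ‖v‖ * (v i * v j) := by
    rw [← integral_neg]; congr 1; ext v; ring
  rw [h2] at h
  linarith

private lemma moment_diag_eq8 (G : ℝ → ℝ) (c : ℝ) (i j : Fin d) :
    ∫ v in ball (0 : EuclideanSpace ℝ (Fin d)) c, G ‖v‖ * (v i)^2
      = ∫ v in ball (0 : EuclideanSpace ℝ (Fin d)) c, G ‖v‖ * (v j)^2 := by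
  classical
  set e : EuclideanSpace ℝ (Fin d) ≃ₗᵢ[ℝ] EuclideanSpace ℝ (Fin d) :=
    LinearIsometryEquiv.piLpCongrLeft 2 ℝ ℝ (Equiv.swap i j) with he
  have happ : ∀ (v : EuclideanSpace ℝ (Fin d)) (t : Fin d),
      e v t = v (Equiv.swap i j t) := by
    intro v t
    rw [he, LinearIsometryEquiv.piLpCongrLeft_apply]
    simp [Equiv.piCongrLeft'_apply, Equiv.symm_swap]
  have h := isom_integral8 e (fun v => G ‖v‖ * (v i)^2) c
  simp only [e.norm_map, happ] at h
  rw [Equiv.swap_apply_left] at h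
  exact h.symm

private lemma norm_sq_sum8 (v : EuclideanSpace ℝ (Fin d)) : ‖v‖^2 = ∑ t, (v t)^2 := by
  rw [EuclideanSpace.norm_eq, Real.sq_sqrt]
  · simp
  · positivity

private lemma moment_diag8 (hd : 1 ≤ d) (G : ℝ → ℝ) (hGm : Measurable G)
    (hGb : ∀ r : ℝ, 0 < r → ∃ C : ℝ, ∀ a ∈ Set.Icc (0 : ℝ) r, |G a| ≤ C)
    (c : ℝ) (hc : 0 < c) (i : Fin d) :
    ∫ v in ball (0 : EuclideanSpace ℝ (Fin d)) c, G ‖v‖ * (v i)^2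
      = (1 / (d : ℝ)) * ∫ v in ball (0 : EuclideanSpace ℝ (Fin d)) c, G ‖v‖ * ‖v‖^2 := by
  have hsum : ∫ v in ball (0 : EuclideanSpace ℝ (Fin d)) c, G ‖v‖ * ‖v‖^2
      = ∑ j : Fin d, ∫ v in ball (0 : EuclideanSpace ℝ (Fin d)) c, G ‖v‖ * (v j)^2 := by
    rw [← integral_finset_sum]
    · congr 1; ext v
      rw [norm_sq_sum8, Finset.mul_sum]
    · intro j _
      exact integrable_aux8 G hGm hGb c hc _ (((EuclideanSpace.proj j).continuous).pow 2)
  have hall : ∀ j : Fin d,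
      (∫ v in ball (0 : EuclideanSpace ℝ (Fin d)) c, G ‖v‖ * (v j)^2)
        = ∫ v in ball (0 : EuclideanSpace ℝ (Fin d)) c, G ‖v‖ * (v i)^2 :=
    fun j => moment_diag_eq8 G c j i
  rw [hsum, Finset.sum_congr rfl (fun j _ => hall j), Finset.sum_const, Finset.card_univ,
    Fintype.card_fin, nsmul_eq_mul]
  have hd0 : (d : ℝ) ≠ 0 := by positivity
  field_simp

end Aux

/-- For `f : ℝᵐ → ℝ` and `k : ℝᵈ → ℝᵐ` of class `C²` with `k 0 = x`, and
`G : [0,∞) → ℝ` locally bounded measurable, for all `c > 0`,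
`∫_{B(0,c)} G(‖v‖)·[⟨∇f(x), k'(0)v + ½k''(0)(v,v)⟩ + ½f''(x)(k'(0)v, k'(0)v)] dv
  = ½ Δ(f∘k)(0) · (1/d)·∫_{B(0,c)} G(‖v‖)·‖v‖² dv`, where `Δ` is the Euclidean
Laplacian `Δg(0) = Σᵢ ∂²g/∂(xⁱ)²(0)`. -/
theorem stmt8 (d m : ℕ) (hd : 1 ≤ d)
    (f : EuclideanSpace ℝ (Fin m) → ℝ)
    (k : EuclideanSpace ℝ (Fin d) → EuclideanSpace ℝ (Fin m))
    (x : EuclideanSpace ℝ (Fin m))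
    (hf : ContDiff ℝ 2 f) (hk : ContDiff ℝ 2 k) (hk0 : k 0 = x)
    (G : ℝ → ℝ) (hGm : Measurable G)
    (hGb : ∀ r : ℝ, 0 < r → ∃ C : ℝ, ∀ a ∈ Set.Icc (0 : ℝ) r, |G a| ≤ C)
    (c : ℝ) (hc : 0 < c) :
    ∫ v in ball (0 : EuclideanSpace ℝ (Fin d)) c,
        G ‖v‖ *
          (⟪gradient f x, fderiv ℝ k 0 v + (2⁻¹ : ℝ) • fderiv ℝ (fderiv ℝ k) 0 v v⟫ +
            2⁻¹ * fderiv ℝ (fderiv ℝ f) x (fderiv ℝ k 0 v) (fderiv ℝ k 0 v)) =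
      2⁻¹ * (∑ i : Fin d,
          fderiv ℝ (fun y => fderiv ℝ (f ∘ k) y (EuclideanSpace.single i 1)) 0
            (EuclideanSpace.single i 1)) *
        ((1 / (d : ℝ)) *
          ∫ v in ball (0 : EuclideanSpace ℝ (Fin d)) c, G ‖v‖ * ‖v‖ ^ 2) := by
  classical
  set K1 := fderiv ℝ k 0 with hK1
  set K2 := fderiv ℝ (fderiv ℝ k) 0 with hK2
  set F2 := fderiv ℝ (fderiv ℝ f) x with hF2
  set g0 := gradient f x with hg0
  -- gradient pairing is the Fréchet derivative
  have hgrad : ∀ u, ⟪g0, u⟫ = fderiv ℝ f x u := by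
    intro u
    rw [hg0]
    simp [gradient, InnerProductSpace.toDual_symm_apply]
  -- the quadratic form
  set Q : EuclideanSpace ℝ (Fin d) → EuclideanSpace ℝ (Fin d) → ℝ :=
    fun v w => ⟪g0, K2 v w⟫ + F2 (K1 v) (K1 w) with hQdef
  -- second derivative of the composition
  have hlap : ∀ v w, fderiv ℝ (fun y => fderiv ℝ (f ∘ k) y w) 0 v = Q v w := by
    intro v w
    have hfd : Differentiable ℝ f := hf.differentiable two_ne_zero
    have hkd : Differentiable ℝ k := hk.differentiable two_ne_zero
    have hf2 : ContDiff ℝ (1 + 1) f := by norm_num at hf ⊢; exact hf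
    have hk2 : ContDiff ℝ (1 + 1) k := by norm_num at hk ⊢; exact hk
    have hf' : Differentiable ℝ (fderiv ℝ f) :=
      (contDiff_succ_iff_fderiv.mp hf2).2.2.differentiable one_ne_zero
    have hk' : Differentiable ℝ (fderiv ℝ k) :=
      (contDiff_succ_iff_fderiv.mp hk2).2.2.differentiable one_ne_zero
    have hcomp : (fun y => fderiv ℝ (f ∘ k) y w) =
        fun y => (fderiv ℝ f (k y)) (fderiv ℝ k y w) := by
      funext y
      rw [fderiv_comp y (hfd _) (hkd _)]
      rfl
    rw [hcomp]
    have hA : HasFDerivAt (fun y => fderiv ℝ f (k y))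
        ((fderiv ℝ (fderiv ℝ f) x).comp (fderiv ℝ k 0)) 0 := by
      have := ((hf' (k 0)).hasFDerivAt).comp 0 ((hkd 0).hasFDerivAt)
      rwa [hk0] at this
    have hu : HasFDerivAt (fun y => fderiv ℝ k y w)
        ((fderiv ℝ (fderiv ℝ k) 0).flip w) 0 := by
      have h := ((hk' 0).hasFDerivAt).clm_apply (hasFDerivAt_const w 0)
      simpa using h
    have h := hA.clm_apply hu
    rw [h.fderiv]
    rw [hQdef]
    simp only [ContinuousLinearMap.add_apply, ContinuousLinearMap.coe_comp', Function.comp_apply,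
      ContinuousLinearMap.flip_apply, hk0, hgrad]
    try ring
  -- the quadratic form as a continuous bilinear map
  set B : EuclideanSpace ℝ (Fin d) →L[ℝ] EuclideanSpace ℝ (Fin d) →L[ℝ] ℝ :=
    ((ContinuousLinearMap.compL ℝ (EuclideanSpace ℝ (Fin d)) (EuclideanSpace ℝ (Fin m)) ℝ
        (innerSL ℝ g0)).comp K2) +
      (((ContinuousLinearMap.compL ℝ (EuclideanSpace ℝ (Fin d)) (EuclideanSpace ℝ (Fin m)) ℝ).flip
          K1).comp (F2.comp K1)) with hBdef
  have hBQ : ∀ v w, B v w = Q v w := by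
    intro v w
    simp [hBdef, hQdef]
  -- expansion of v in the standard basis
  have hexp : ∀ v : EuclideanSpace ℝ (Fin d),
      v = ∑ i, v i • EuclideanSpace.single i (1 : ℝ) := by
    intro v
    ext t
    rw [WithLp.ofLp_sum, Finset.sum_apply]
    simp [EuclideanSpace.single_apply]
  have hBexpand : ∀ v : EuclideanSpace ℝ (Fin d),
      B v v = ∑ i, ∑ j, (v i * v j) *
        B (EuclideanSpace.single i 1) (EuclideanSpace.single j 1) := by
    intro v
    conv_lhs => rw [hexp v]
    rw [map_sum]
    simp only [ContinuousLinearMap.coe_sum', Finset.sum_apply, map_smulₛₗ, RingHom.id_apply,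
      ContinuousLinearMap.coe_smul', Pi.smul_apply, map_sum, smul_eq_mul, Finset.mul_sum]
    rw [Finset.sum_comm]
    congr 1; ext i; congr 1; ext j
    ring
  set T := ∫ v in ball (0 : EuclideanSpace ℝ (Fin d)) c, G ‖v‖ * ‖v‖ ^ 2 with hT
  set q : Fin d → Fin d → ℝ :=
    fun i j => B (EuclideanSpace.single i 1) (EuclideanSpace.single j 1) with hq
  have hsplit : ∀ v : EuclideanSpace ℝ (Fin d),
      G ‖v‖ * (⟪g0, K1 v + (2⁻¹ : ℝ) • K2 v v⟫ + 2⁻¹ * F2 (K1 v) (K1 v))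
        = G ‖v‖ * ⟪g0, K1 v⟫ + 2⁻¹ * (G ‖v‖ * B v v) := by
    intro v
    rw [hBQ, hQdef]
    simp only [inner_add_right, real_inner_smul_right]
    ring
  have hrw : ∫ v in ball (0 : EuclideanSpace ℝ (Fin d)) c,
      G ‖v‖ * (⟪g0, K1 v + (2⁻¹ : ℝ) • K2 v v⟫ + 2⁻¹ * F2 (K1 v) (K1 v))
      = ∫ v in ball (0 : EuclideanSpace ℝ (Fin d)) c,
          (G ‖v‖ * ⟪g0, K1 v⟫ + 2⁻¹ * (G ‖v‖ * B v v)) := by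
    congr 1; funext v; exact hsplit v
  have int1 : IntegrableOn (fun v => G ‖v‖ * ⟪g0, K1 v⟫)
      (ball (0 : EuclideanSpace ℝ (Fin d)) c) :=
    integrable_aux8 G hGm hGb c hc _ (continuous_const.inner K1.continuous)
  have int2 : IntegrableOn (fun v => G ‖v‖ * B v v)
      (ball (0 : EuclideanSpace ℝ (Fin d)) c) :=
    integrable_aux8 G hGm hGb c hc _
      (B.continuous.clm_apply continuous_id)
  have hodd : ∫ v in ball (0 : EuclideanSpace ℝ (Fin d)) c, G ‖v‖ * ⟪g0, K1 v⟫ = 0 := by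
    refine odd_integral8 _ (fun v => ?_) c
    simp only [norm_neg, map_neg, inner_neg_right]
    ring
  have hBint : ∫ v in ball (0 : EuclideanSpace ℝ (Fin d)) c, G ‖v‖ * B v v
      = (∑ i, q i i) * ((1 / (d : ℝ)) * T) := by
    have e1 : ∫ v in ball (0 : EuclideanSpace ℝ (Fin d)) c, G ‖v‖ * B v v
        = ∫ v in ball (0 : EuclideanSpace ℝ (Fin d)) c,
            ∑ p : Fin d × Fin d, G ‖v‖ * ((v p.1 * v p.2) * q p.1 p.2) := by
      congr 1; funext v
      rw [hBexpand v, ← Finset.sum_product', Finset.univ_product_univ]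
      rw [Finset.mul_sum]
    rw [e1, integral_finset_sum]
    swap
    · intro p _
      refine integrable_aux8 G hGm hGb c hc _ ?_
      exact (((EuclideanSpace.proj p.1).continuous.mul
        (EuclideanSpace.proj p.2).continuous).mul continuous_const)
    have e2 : ∀ p : Fin d × Fin d,
        (∫ v in ball (0 : EuclideanSpace ℝ (Fin d)) c, G ‖v‖ * ((v p.1 * v p.2) * q p.1 p.2))
          = q p.1 p.2 * ∫ v in ball (0 : EuclideanSpace ℝ (Fin d)) c, G ‖v‖ * (v p.1 * v p.2) := by
      intro p
      rw [← integral_const_mul]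
      congr 1; funext v; ring
    have e3 : ∀ p : Fin d × Fin d,
        q p.1 p.2 * (∫ v in ball (0 : EuclideanSpace ℝ (Fin d)) c, G ‖v‖ * (v p.1 * v p.2))
          = if p.1 = p.2 then q p.1 p.2 * ((1 / (d : ℝ)) * T) else 0 := by
      intro p
      by_cases hp : p.1 = p.2
      · rw [if_pos hp]
        have : ∫ v in ball (0 : EuclideanSpace ℝ (Fin d)) c, G ‖v‖ * (v p.1 * v p.2)
            = (1 / (d : ℝ)) * T := by
          rw [← hp]
          have := moment_diag8 hd G hGm hGb c hc p.1
          rw [← this]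
          congr 1; funext v; ring
        rw [this]
      · rw [if_neg hp, moment_offdiag8 G c p.1 p.2 hp, mul_zero]
    calc ∑ p : Fin d × Fin d, ∫ v in ball (0 : EuclideanSpace ℝ (Fin d)) c,
            G ‖v‖ * ((v p.1 * v p.2) * q p.1 p.2)
        = ∑ p : Fin d × Fin d, if p.1 = p.2 then q p.1 p.2 * ((1 / (d : ℝ)) * T) else 0 := by
          refine Finset.sum_congr rfl fun p _ => ?_
          rw [e2 p, e3 p]
      _ = ∑ i : Fin d, q i i * ((1 / (d : ℝ)) * T) := by
          rw [← Finset.univ_product_univ, Finset.sum_product]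
          refine Finset.sum_congr rfl fun i _ => ?_
          simp [Finset.sum_ite_eq' Finset.univ i]
      _ = (∑ i, q i i) * ((1 / (d : ℝ)) * T) := by rw [Finset.sum_mul]
  have hlapsum : (∑ i : Fin d,
      fderiv ℝ (fun y => fderiv ℝ (f ∘ k) y (EuclideanSpace.single i 1)) 0
        (EuclideanSpace.single i 1)) = ∑ i, q i i := by
    refine Finset.sum_congr rfl fun i _ => ?_
    rw [hlap, ← hBQ]
  rw [hrw, integral_add int1 (int2.const_mul _), hodd, integral_const_mul, hBint, hlapsum]
  ring
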